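/- Let T be a tree with nodes N_1, …, N_k where N_i has m_i inputs, and l = (∑_i m_i) − k + 1 leaves. Then the bijection α of Lemma on trees determines a Kelly–Mac Lane graph ξ_T : X_{m_1} ⊗ ⋯ ⊗ X_{m_k} → X_l, i.e., a bijection between the + occurrences and the − occurrences in the twisted sum v(X_{m_1} ⊗ ⋯ ⊗ X_{m_k})^op ++ v(X_l), and this assignment T ↦ ξ_T is injective. -/

import Mathlib

namespace KM

/-! ### Shapes and variable sets (Kelly–Mac Lane) -/

/-- Shapes: formal objects built from `1`, `I`, `⊗` and `[ , ]`. -/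
inductive Shape : Type where
  | unit : Shape                     -- I
  | one : Shape                      -- 1
  | tensor : Shape → Shape → Shape   -- ⊗
  | hom : Shape → Shape → Shape      -- [ , ]

/-- The variable set of a shape, as a list of signs (`true` = `+`, `false` = `−`). -/
def vset : Shape → List Bool
  | .unit => []
  | .one => [true]
  | .tensor T S => vset T ++ vset S
  | .hom T S => (vset T).map not ++ vset S

/-- `1 ⊗ ⋯ ⊗ 1` (m copies), with `1^{⊗0} = I`. -/
def onePow : ℕ → Shape
  | 0 => .unit
  | n + 1 => .tensor (onePow n) .one

/-- `X_m = [1^{⊗m}, 1]`. -/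
def Xm (m : ℕ) : Shape := .hom (onePow m) .one

/-- The type of variables (occurrences of `1`) of a shape. -/
def VarsOf : Shape → Type
  | .unit => Empty
  | .one => Unit
  | .tensor T S => VarsOf T ⊕ VarsOf S
  | .hom T S => VarsOf T ⊕ VarsOf S

/-- The variance (sign) of a variable of a shape. -/
def sgn : (T : Shape) → VarsOf T → Bool
  | .unit, x => x.elim
  | .one, _ => true
  | .tensor T S, x => Sum.elim (sgn T) (sgn S) x
  | .hom T S, x => Sum.elim (fun v => ! sgn T v) (sgn S) x

/-- The variance of a variable in the twisted sum `v(T)^op ++ v(S)`. -/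
def tsgn (T S : Shape) (x : VarsOf T ⊕ VarsOf S) : Bool :=
  Sum.elim (fun v => ! sgn T v) (sgn S) x

/-- A Kelly–Mac Lane graph `T → S`: a fixed-point free pairing (involution)
of the variables in the twisted sum `v(T)^op ++ v(S)` matching `+`'s with `−`'s. -/
structure KMGraph (T S : Shape) : Type where
  mate : VarsOf T ⊕ VarsOf S → VarsOf T ⊕ VarsOf S
  invol : ∀ x, mate (mate x) = x
  nofix : ∀ x, mate x ≠ x
  sflip : ∀ x, tsgn T S (mate x) = ! tsgn T S x

/-- The identity graph `1 : T → T`. -/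
def idG (T : Shape) : KMGraph T T where
  mate := Sum.elim Sum.inr Sum.inl
  invol := by rintro (v | v) <;> rfl
  nofix := by rintro (v | v) h <;> simp at h
  sflip := by rintro (v | v) <;> simp [tsgn]

/-- Associativity `a : (T ⊗ S) ⊗ R → T ⊗ (S ⊗ R)`. -/
def aG (T S R : Shape) : KMGraph (.tensor (.tensor T S) R) (.tensor T (.tensor S R)) where
  mate := fun x => match x with
    | .inl (.inl (.inl t)) => .inr (.inl t)
    | .inl (.inl (.inr s)) => .inr (.inr (.inl s))
    | .inl (.inr r) => .inr (.inr (.inr r))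
    | .inr (.inl t) => .inl (.inl (.inl t))
    | .inr (.inr (.inl s)) => .inl (.inl (.inr s))
    | .inr (.inr (.inr r)) => .inl (.inr r)
  invol := by rintro (((t | s) | r) | (t | (s | r))) <;> rfl
  nofix := by rintro (((t | s) | r) | (t | (s | r))) h <;> simp at h
  sflip := by rintro (((t | s) | r) | (t | (s | r))) <;> simp [tsgn, sgn, Sum.elim]

/-- Inverse associativity `a⁻¹ : T ⊗ (S ⊗ R) → (T ⊗ S) ⊗ R`. -/
def aInvG (T S R : Shape) : KMGraph (.tensor T (.tensor S R)) (.tensor (.tensor T S) R) where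
  mate := fun x => match x with
    | .inl (.inl t) => .inr (.inl (.inl t))
    | .inl (.inr (.inl s)) => .inr (.inl (.inr s))
    | .inl (.inr (.inr r)) => .inr (.inr r)
    | .inr (.inl (.inl t)) => .inl (.inl t)
    | .inr (.inl (.inr s)) => .inl (.inr (.inl s))
    | .inr (.inr r) => .inl (.inr (.inr r))
  invol := by rintro ((t | (s | r)) | ((t | s) | r)) <;> rfl
  nofix := by rintro ((t | (s | r)) | ((t | s) | r)) h <;> simp at h
  sflip := by rintro ((t | (s | r)) | ((t | s) | r)) <;> simp [tsgn, sgn, Sum.elim]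

/-- Unit `b : T ⊗ I → T`. -/
def bG (T : Shape) : KMGraph (.tensor T .unit) T where
  mate := fun x => match x with
    | .inl (.inl t) => .inr t
    | .inl (.inr e) => e.elim
    | .inr t => .inl (.inl t)
  invol := by rintro ((t | e) | t) <;> first | exact e.elim | rfl
  nofix := by rintro ((t | e) | t) h <;> first | exact e.elim | simp at h
  sflip := by rintro ((t | e) | t) <;> first | exact e.elim | simp [tsgn, sgn, Sum.elim]

/-- Inverse unit `b⁻¹ : T → T ⊗ I`. -/
def bInvG (T : Shape) : KMGraph T (.tensor T .unit) where
  mate := fun x => match x with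
    | .inl t => .inr (.inl t)
    | .inr (.inl t) => .inl t
    | .inr (.inr e) => e.elim
  invol := by rintro (t | (t | e)) <;> first | exact e.elim | rfl
  nofix := by rintro (t | (t | e)) h <;> first | exact e.elim | simp at h
  sflip := by rintro (t | (t | e)) <;> first | exact e.elim | simp [tsgn, sgn, Sum.elim]

/-- Symmetry `c : T ⊗ S → S ⊗ T`. -/
def cG (T S : Shape) : KMGraph (.tensor T S) (.tensor S T) where
  mate := fun x => match x with
    | .inl (.inl t) => .inr (.inr t)
    | .inl (.inr s) => .inr (.inl s)
    | .inr (.inl s) => .inl (.inr s)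
    | .inr (.inr t) => .inl (.inl t)
  invol := by rintro ((t | s) | (s | t)) <;> rfl
  nofix := by rintro ((t | s) | (s | t)) h <;> simp at h
  sflip := by rintro ((t | s) | (s | t)) <;> simp [tsgn, sgn, Sum.elim]

/-- `d : T → [S, T ⊗ S]`. -/
def dG (T S : Shape) : KMGraph T (.hom S (.tensor T S)) where
  mate := fun x => match x with
    | .inl t => .inr (.inr (.inl t))
    | .inr (.inl s) => .inr (.inr (.inr s))
    | .inr (.inr (.inl t)) => .inl t
    | .inr (.inr (.inr s)) => .inr (.inl s)
  invol := by rintro (t | (s | (t | s))) <;> rfl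
  nofix := by rintro (t | (s | (t | s))) h <;> first | cases h | simp at h
  sflip := by rintro (t | (s | (t | s))) <;> simp [tsgn, sgn, Sum.elim]

/-- `e : [T, S] ⊗ T → S`. -/
def eG (T S : Shape) : KMGraph (.tensor (.hom T S) T) S where
  mate := fun x => match x with
    | .inl (.inl (.inl t)) => .inl (.inr t)
    | .inl (.inl (.inr s)) => .inr s
    | .inl (.inr t) => .inl (.inl (.inl t))
    | .inr s => .inl (.inl (.inr s))
  invol := by rintro (((t | s) | t) | s) <;> rfl
  nofix := by rintro (((t | s) | t) | s) h <;> first | cases h | simp at h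
  sflip := by rintro (((t | s) | t) | s) <;> simp [tsgn, sgn, Sum.elim]


section TensorHom
variable {T T' S S' : Shape}

/-- relabelling of the variables of `f : T → T'` into those of `T ⊗ S → T' ⊗ S'`. -/
def rlf (T T' S S' : Shape) : VarsOf T ⊕ VarsOf T' → VarsOf (.tensor T S) ⊕ VarsOf (.tensor T' S') :=
  Sum.elim (fun a => .inl (.inl a)) (fun a => .inr (.inl a))

/-- relabelling of the variables of `g : S → S'` into those of `T ⊗ S → T' ⊗ S'`. -/
def rlg (T T' S S' : Shape) : VarsOf S ⊕ VarsOf S' → VarsOf (.tensor T S) ⊕ VarsOf (.tensor T' S') :=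
  Sum.elim (fun a => .inl (.inr a)) (fun a => .inr (.inr a))

def tmate (f : KMGraph T T') (g : KMGraph S S') :
    VarsOf (.tensor T S) ⊕ VarsOf (.tensor T' S') → VarsOf (.tensor T S) ⊕ VarsOf (.tensor T' S')
  | .inl (.inl t) => rlf T T' S S' (f.mate (.inl t))
  | .inl (.inr s) => rlg T T' S S' (g.mate (.inl s))
  | .inr (.inl t') => rlf T T' S S' (f.mate (.inr t'))
  | .inr (.inr s') => rlg T T' S S' (g.mate (.inr s'))

lemma tmate_rlf (f : KMGraph T T') (g : KMGraph S S') (z : VarsOf T ⊕ VarsOf T') :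
    tmate f g (rlf T T' S S' z) = rlf T T' S S' (f.mate z) := by cases z <;> rfl

lemma tmate_rlg (f : KMGraph T T') (g : KMGraph S S') (z : VarsOf S ⊕ VarsOf S') :
    tmate f g (rlg T T' S S' z) = rlg T T' S S' (g.mate z) := by cases z <;> rfl

lemma rlf_inj : Function.Injective (rlf T T' S S') := by
  rintro (a | a) (b | b) h <;> simp [rlf] at h <;> (try injection h with h) <;> first | (cases h; rfl) | simp [h]

lemma rlg_inj : Function.Injective (rlg T T' S S') := by
  rintro (a | a) (b | b) h <;> simp [rlg] at h <;> (try injection h with h) <;> first | (cases h; rfl) | simp [h]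

lemma tsgn_rlf (z : VarsOf T ⊕ VarsOf T') :
    tsgn (.tensor T S) (.tensor T' S') (rlf T T' S S' z) = tsgn T T' z := by
  cases z <;> rfl

lemma tsgn_rlg (z : VarsOf S ⊕ VarsOf S') :
    tsgn (.tensor T S) (.tensor T' S') (rlg T T' S S' z) = tsgn S S' z := by
  cases z <;> rfl

/-- Tensor product of graphs `f ⊗ g : T ⊗ S → T' ⊗ S'`. -/
def tensorG (f : KMGraph T T') (g : KMGraph S S') : KMGraph (.tensor T S) (.tensor T' S') where
  mate := tmate f g
  invol := by
    rintro ((t | s) | (t' | s'))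
    · show tmate f g (rlf T T' S S' (f.mate (.inl t))) = _
      rw [tmate_rlf, f.invol]; rfl
    · show tmate f g (rlg T T' S S' (g.mate (.inl s))) = _
      rw [tmate_rlg, g.invol]; rfl
    · show tmate f g (rlf T T' S S' (f.mate (.inr t'))) = _
      rw [tmate_rlf, f.invol]; rfl
    · show tmate f g (rlg T T' S S' (g.mate (.inr s'))) = _
      rw [tmate_rlg, g.invol]; rfl
  nofix := by
    rintro ((t | s) | (t' | s')) h
    · exact f.nofix (.inl t) (rlf_inj h)
    · exact g.nofix (.inl s) (rlg_inj h)
    · exact f.nofix (.inr t') (rlf_inj h)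
    · exact g.nofix (.inr s') (rlg_inj h)
  sflip := by
    rintro ((t | s) | (t' | s'))
    · show tsgn _ _ (rlf T T' S S' (f.mate (.inl t))) = _
      rw [tsgn_rlf, f.sflip]; rfl
    · show tsgn _ _ (rlg T T' S S' (g.mate (.inl s))) = _
      rw [tsgn_rlg, g.sflip]; rfl
    · show tsgn _ _ (rlf T T' S S' (f.mate (.inr t'))) = _
      rw [tsgn_rlf, f.sflip]; rfl
    · show tsgn _ _ (rlg T T' S S' (g.mate (.inr s'))) = _
      rw [tsgn_rlg, g.sflip]; rfl

/-- relabelling of the variables of `f : T → T'` into those of `[T', S] → [T, S']`. -/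
def hlf (T T' S S' : Shape) : VarsOf T ⊕ VarsOf T' → VarsOf (.hom T' S) ⊕ VarsOf (.hom T S') :=
  Sum.elim (fun a => .inr (.inl a)) (fun a => .inl (.inl a))

/-- relabelling of the variables of `g : S → S'` into those of `[T', S] → [T, S']`. -/
def hlg (T T' S S' : Shape) : VarsOf S ⊕ VarsOf S' → VarsOf (.hom T' S) ⊕ VarsOf (.hom T S') :=
  Sum.elim (fun a => .inl (.inr a)) (fun a => .inr (.inr a))

def hmate (f : KMGraph T T') (g : KMGraph S S') :
    VarsOf (.hom T' S) ⊕ VarsOf (.hom T S') → VarsOf (.hom T' S) ⊕ VarsOf (.hom T S')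
  | .inl (.inl t') => hlf T T' S S' (f.mate (.inr t'))
  | .inl (.inr s) => hlg T T' S S' (g.mate (.inl s))
  | .inr (.inl t) => hlf T T' S S' (f.mate (.inl t))
  | .inr (.inr s') => hlg T T' S S' (g.mate (.inr s'))

lemma hmate_hlf (f : KMGraph T T') (g : KMGraph S S') (z : VarsOf T ⊕ VarsOf T') :
    hmate f g (hlf T T' S S' z) = hlf T T' S S' (f.mate z) := by cases z <;> rfl

lemma hmate_hlg (f : KMGraph T T') (g : KMGraph S S') (z : VarsOf S ⊕ VarsOf S') :
    hmate f g (hlg T T' S S' z) = hlg T T' S S' (g.mate z) := by cases z <;> rfl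

lemma hlf_inj : Function.Injective (hlf T T' S S') := by
  rintro (a | a) (b | b) h <;> simp [hlf] at h <;> (try injection h with h) <;> first | (cases h; rfl) | simp [h]

lemma hlg_inj : Function.Injective (hlg T T' S S') := by
  rintro (a | a) (b | b) h <;> simp [hlg] at h <;> (try injection h with h) <;> first | (cases h; rfl) | simp [h]

lemma tsgn_hlf (z : VarsOf T ⊕ VarsOf T') :
    tsgn (.hom T' S) (.hom T S') (hlf T T' S S' z) = tsgn T T' z := by
  cases z <;> simp [tsgn, sgn, Sum.elim, hlf]

lemma tsgn_hlg (z : VarsOf S ⊕ VarsOf S') :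
    tsgn (.hom T' S) (.hom T S') (hlg T T' S S' z) = tsgn S S' z := by
  cases z <;> simp [tsgn, sgn, Sum.elim, hlg]

/-- `[f, g] : [T', S] → [T, S']` for graphs `f : T → T'`, `g : S → S'`. -/
def homG (f : KMGraph T T') (g : KMGraph S S') : KMGraph (.hom T' S) (.hom T S') where
  mate := hmate f g
  invol := by
    rintro ((t' | s) | (t | s'))
    · show hmate f g (hlf T T' S S' (f.mate (.inr t'))) = _
      rw [hmate_hlf, f.invol]; rfl
    · show hmate f g (hlg T T' S S' (g.mate (.inl s))) = _
      rw [hmate_hlg, g.invol]; rfl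
    · show hmate f g (hlf T T' S S' (f.mate (.inl t))) = _
      rw [hmate_hlf, f.invol]; rfl
    · show hmate f g (hlg T T' S S' (g.mate (.inr s'))) = _
      rw [hmate_hlg, g.invol]; rfl
  nofix := by
    rintro ((t' | s) | (t | s')) h
    · exact f.nofix (.inr t') (hlf_inj h)
    · exact g.nofix (.inl s) (hlg_inj h)
    · exact f.nofix (.inl t) (hlf_inj h)
    · exact g.nofix (.inr s') (hlg_inj h)
  sflip := by
    rintro ((t' | s) | (t | s'))
    · show tsgn _ _ (hlf T T' S S' (f.mate (.inr t'))) = _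
      rw [tsgn_hlf, f.sflip]
      show _ = ! tsgn (.hom T' S) (.hom T S') (hlf T T' S S' (.inr t'))
      rw [tsgn_hlf]
    · show tsgn _ _ (hlg T T' S S' (g.mate (.inl s))) = _
      rw [tsgn_hlg, g.sflip]
      show _ = ! tsgn (.hom T' S) (.hom T S') (hlg T T' S S' (.inl s))
      rw [tsgn_hlg]
    · show tsgn _ _ (hlf T T' S S' (f.mate (.inl t))) = _
      rw [tsgn_hlf, f.sflip]
      show _ = ! tsgn (.hom T' S) (.hom T S') (hlf T T' S S' (.inl t))
      rw [tsgn_hlf]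
    · show tsgn _ _ (hlg T T' S S' (g.mate (.inr s'))) = _
      rw [tsgn_hlg, g.sflip]
      show _ = ! tsgn (.hom T' S) (.hom T S') (hlg T T' S S' (.inr s'))
      rw [tsgn_hlg]

end TensorHom

/-! ### Composition of graphs, relationally -/

section Comp
variable (T S R : Shape)

/-- Inclusion of the variables of `T → S` into the variables of a composable pair. -/
def eTS : VarsOf T ⊕ VarsOf S → VarsOf T ⊕ VarsOf S ⊕ VarsOf R :=
  Sum.elim Sum.inl (fun s => Sum.inr (Sum.inl s))

def eSR : VarsOf S ⊕ VarsOf R → VarsOf T ⊕ VarsOf S ⊕ VarsOf R :=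
  Sum.elim (fun s => Sum.inr (Sum.inl s)) (fun r => Sum.inr (Sum.inr r))

def eTR : VarsOf T ⊕ VarsOf R → VarsOf T ⊕ VarsOf S ⊕ VarsOf R :=
  Sum.elim Sum.inl (fun r => Sum.inr (Sum.inr r))

variable {T S R}

/-- One step along the pairings of `f` or of `g`. -/
def Step (f : KMGraph T S) (g : KMGraph S R) (x y : VarsOf T ⊕ VarsOf S ⊕ VarsOf R) : Prop :=
  (∃ u, eTS T S R u = x ∧ eTS T S R (f.mate u) = y) ∨
  (∃ u, eSR T S R u = x ∧ eSR T S R (g.mate u) = y)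

/-- Two variables are connected if they are joined by an alternating path. -/
def Connected (f : KMGraph T S) (g : KMGraph S R) :
    (VarsOf T ⊕ VarsOf S ⊕ VarsOf R) → (VarsOf T ⊕ VarsOf S ⊕ VarsOf R) → Prop :=
  Relation.ReflTransGen (Step f g)

/-- `h` is the composite graph `g ∘ f`: it pairs `u` with `v` exactly when they are
joined by an alternating path through the variables of `S`. -/
def IsComposite (f : KMGraph T S) (g : KMGraph S R) (h : KMGraph T R) : Prop :=
  ∀ u, Connected f g (eTR T S R u) (eTR T S R (h.mate u))

/-- `f` and `g` are compatible: composing them gives no closed loops, i.e. every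
variable of `S` is linked to a variable of `T` or `R`. -/
def Compatible (f : KMGraph T S) (g : KMGraph S R) : Prop :=
  ∀ s : VarsOf S, ∃ u, Connected f g (Sum.inr (Sum.inl s)) (eTR T S R u)

end Comp

/-- The allowable morphisms: the smallest class of graphs containing `1, a, a⁻¹, b, b⁻¹, c, d, e`
and closed under `⊗`, `[ , ]` and composition. -/
inductive Allowable : {T S : Shape} → KMGraph T S → Prop
  | id (T : Shape) : Allowable (idG T)
  | assoc (T S R : Shape) : Allowable (aG T S R)
  | assocInv (T S R : Shape) : Allowable (aInvG T S R)
  | unit (T : Shape) : Allowable (bG T)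
  | unitInv (T : Shape) : Allowable (bInvG T)
  | braid (T S : Shape) : Allowable (cG T S)
  | dgen (T S : Shape) : Allowable (dG T S)
  | egen (T S : Shape) : Allowable (eG T S)
  | tensor {T T' S S' : Shape} {f : KMGraph T T'} {g : KMGraph S S'} :
      Allowable f → Allowable g → Allowable (tensorG f g)
  | homc {T T' S S' : Shape} {f : KMGraph T T'} {g : KMGraph S S'} :
      Allowable f → Allowable g → Allowable (homG f g)
  | comp {T S R : Shape} {f : KMGraph T S} {g : KMGraph S R} {h : KMGraph T R} :
      Allowable f → Allowable g → IsComposite f g h → Allowable h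

/-! ### Trees -/

/-- The data of a (combed) tree with `k` ordered nodes of arities `m 0, …, m (k-1)` and
`l` leaves: a bijection from node-inputs plus a root marker to node-outputs plus leaf markers. -/
abbrev TreeBij (k : ℕ) (m : Fin k → ℕ) (l : ℕ) : Type :=
  ((Σ i : Fin k, Fin (m i)) ⊕ Unit) ≃ (Fin k ⊕ Fin l)

/-- The loop condition: a nonempty cyclic sequence of node indices `t 0, …, t n` such that
the `b j`-th input of node `t j` is attached to the output of node `t (j-1)` (cyclically). -/
def HasLoop {k : ℕ} {m : Fin k → ℕ} {l : ℕ} (α : TreeBij k m l) : Prop :=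
  ∃ (n : ℕ) (t : Fin (n + 1) → Fin k) (b : (j : Fin (n + 1)) → Fin (m (t j))),
    ∀ j, α (Sum.inl ⟨t j, b j⟩) = Sum.inl (t (j - 1))

/-- A closed loop in the graph defined by `α` on the nodes `N_1, …, N_k`:
a closed walk along pairwise distinct edges.  An edge is a node input together with the node
output it is attached to under `α`; its endpoints are the two nodes involved. -/
def HasClosedLoop {k : ℕ} {m : Fin k → ℕ} {l : ℕ} (α : TreeBij k m l) : Prop :=
  ∃ (n : ℕ) (v : Fin (n + 1) → Fin k) (e : Fin (n + 1) → Σ i : Fin k, Fin (m i)),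
    Function.Injective e ∧
    ∀ j, ((e j).1 = v j ∧ α (Sum.inl (e j)) = Sum.inl (v (j + 1))) ∨
         ((e j).1 = v (j + 1) ∧ α (Sum.inl (e j)) = Sum.inl (v j))

/-! ### Trees as morphisms in K1 -/

/-- `X_{m 0} ⊗ ⋯ ⊗ X_{m (k-1)}` (associated to the right, with empty tensor `I`). -/
def domShape : (k : ℕ) → (Fin k → ℕ) → Shape
  | 0, _ => .unit
  | k + 1, m => .tensor (Xm (m 0)) (domShape k (fun i => m i.succ))

/-- The `j`-th variable of `1^{⊗m}`. -/
def powVar : (m : ℕ) → Fin m → VarsOf (onePow m)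
  | 0, j => j.elim0
  | m + 1, j => Fin.lastCases (Sum.inr ()) (fun i => Sum.inl (powVar m i)) j

/-- The variable of `X_{m 0} ⊗ ⋯ ⊗ X_{m (k-1)}` corresponding to the `j`-th input of the
`i`-th node. -/
def inputVar : (k : ℕ) → (m : Fin k → ℕ) → (i : Fin k) → Fin (m i) → VarsOf (domShape k m)
  | 0, _, i, _ => i.elim0
  | k + 1, m, i, j =>
    Fin.cases (motive := fun i => Fin (m i) → VarsOf (domShape (k + 1) m))
      (fun j => Sum.inl (Sum.inl (powVar (m 0) j)))
      (fun i' j => Sum.inr (inputVar k (fun t => m t.succ) i' j)) i j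

/-- The variable of `X_{m 0} ⊗ ⋯ ⊗ X_{m (k-1)}` corresponding to the output of the
`i`-th node. -/
def outputVar : (k : ℕ) → (m : Fin k → ℕ) → Fin k → VarsOf (domShape k m)
  | 0, _, i => i.elim0
  | k + 1, m, i =>
    Fin.cases (motive := fun _ => VarsOf (domShape (k + 1) m))
      (Sum.inl (Sum.inr ()))
      (fun i' => Sum.inr (outputVar k (fun t => m t.succ) i')) i

/-- The variable of `X_l` corresponding to the `p`-th leaf. -/
def leafVar (l : ℕ) (p : Fin l) : VarsOf (Xm l) := Sum.inl (powVar l p)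

/-- The variable of `X_l` corresponding to the root. -/
def rootVar (l : ℕ) : VarsOf (Xm l) := Sum.inr ()

/-- Node inputs and the root marker, as variables of the graph
`X_{m 0} ⊗ ⋯ ⊗ X_{m (k-1)} → X_l`. -/
def srcv (k : ℕ) (m : Fin k → ℕ) (l : ℕ) :
    ((Σ i : Fin k, Fin (m i)) ⊕ Unit) → VarsOf (domShape k m) ⊕ VarsOf (Xm l) :=
  Sum.elim (fun x => Sum.inl (inputVar k m x.1 x.2)) (fun _ => Sum.inr (rootVar l))

/-- Node outputs and leaf markers, as variables of the graph
`X_{m 0} ⊗ ⋯ ⊗ X_{m (k-1)} → X_l`. -/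
def targ (k : ℕ) (m : Fin k → ℕ) (l : ℕ) :
    (Fin k ⊕ Fin l) → VarsOf (domShape k m) ⊕ VarsOf (Xm l) :=
  Sum.elim (fun r => Sum.inl (outputVar k m r)) (fun p => Sum.inr (leafVar l p))

/-- The graph `ξ : X_{m 0} ⊗ ⋯ ⊗ X_{m (k-1)} → X_l` represents the tree (bijection) `α`:
its pairing sends each node input (resp. the root marker) exactly where `α` does. -/
def Represents {k : ℕ} {m : Fin k → ℕ} {l : ℕ}
    (ξ : KMGraph (domShape k m) (Xm l)) (α : TreeBij k m l) : Prop :=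
  ∀ x, ξ.mate (srcv k m l x) = targ k m l (α x)

/-- Dual form: the graph `ξ : I → [X_{m 0} ⊗ ⋯ ⊗ X_{m (k-1)}, X_l]` represents the tree `α`. -/
def Represents' {k : ℕ} {m : Fin k → ℕ} {l : ℕ}
    (ξ : KMGraph .unit (.hom (domShape k m) (Xm l))) (α : TreeBij k m l) : Prop :=
  ∀ x, ξ.mate (Sum.inr (srcv k m l x)) = Sum.inr (targ k m l (α x))

/-! The variables of `X_{m 0} ⊗ ⋯ ⊗ X_{m (k-1)} → X_l` are in bijection with node inputs plus
the root (the `+` side of the twisted sum) and node outputs plus leaves (the `−` side), via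
`srcv` and `targ`. Transporting `α` and `α⁻¹` along this bijection gives a sign-reversing
fixed-point-free involution; conversely an involution is determined by its values on one side,
and `targ` is injective, so both `ξ` and `α` are recovered from each other. -/

namespace KMGraph

variable {T S : Shape}

@[ext] lemma ext {ξ η : KMGraph T S} (h : ξ.mate = η.mate) : ξ = η := by
  cases ξ; cases η; cases h; rfl

section OfPairing

variable {A B : Type} (e : A ⊕ B ≃ VarsOf T ⊕ VarsOf S) (α : A ≃ B)
  (hA : ∀ a, tsgn T S (e (.inl a)) = true) (hB : ∀ b, tsgn T S (e (.inr b)) = false)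

def ofPairing : KMGraph T S where
  mate := e ∘ Sum.elim (fun a => .inr (α a)) (fun b => .inl (α.symm b)) ∘ e.symm
  invol := by
    intro v
    obtain ⟨a | b, rfl⟩ := e.surjective v <;> simp
  nofix := by
    intro v
    obtain ⟨a | b, rfl⟩ := e.surjective v <;> simp
  sflip := by
    intro v
    obtain ⟨a | b, rfl⟩ := e.surjective v <;> simp [hA, hB]

lemma ofPairing_mate_inl (a : A) :
    (ofPairing e α hA hB).mate (e (.inl a)) = e (.inr (α a)) := by
  simp [ofPairing]

variable {e α}

/-- An involution is determined by its values on one half of a splitting of its domain. -/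
lemma eq_ofPairing {ξ : KMGraph T S} (h : ∀ a, ξ.mate (e (.inl a)) = e (.inr (α a))) :
    ξ = ofPairing e α hA hB := by
  ext v
  obtain ⟨a | b, rfl⟩ := e.surjective v
  · rw [h, ofPairing_mate_inl]
  · obtain ⟨a, rfl⟩ := α.surjective b
    have hξ : ξ.mate (e (.inr (α a))) = e (.inl a) := by rw [← h, ξ.invol]
    simp [hξ, ofPairing]

end OfPairing

end KMGraph

lemma powVar_last (m : ℕ) : powVar (m + 1) (Fin.last m) = Sum.inr () :=
  Fin.lastCases_last

lemma powVar_castSucc (m : ℕ) (i : Fin m) :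
    powVar (m + 1) i.castSucc = Sum.inl (powVar m i) :=
  Fin.lastCases_castSucc i

def powIdx : (m : ℕ) → VarsOf (onePow m) → Fin m
  | 0, v => v.elim
  | m + 1, v => Sum.elim (fun p => (powIdx m p).castSucc) (fun _ => Fin.last m) v

lemma powIdx_powVar (m : ℕ) (j : Fin m) : powIdx m (powVar m j) = j := by
  induction m with
  | zero => exact j.elim0
  | succ m ih =>
    induction j using Fin.lastCases with
    | last => rw [powVar_last]; rfl
    | cast i => rw [powVar_castSucc]; exact congrArg Fin.castSucc (ih i)

lemma powVar_powIdx (m : ℕ) (v : VarsOf (onePow m)) : powVar m (powIdx m v) = v := by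
  induction m with
  | zero => exact v.elim
  | succ m ih =>
    rcases v with p | _
    · show powVar (m + 1) (powIdx m p).castSucc = _
      rw [powVar_castSucc, ih]
    · exact powVar_last m

def powVarEquiv (m : ℕ) : Fin m ≃ VarsOf (onePow m) :=
  ⟨powVar m, powIdx m, powIdx_powVar m, powVar_powIdx m⟩

def nodeVar (k : ℕ) (m : Fin k → ℕ) : (Σ i : Fin k, Fin (m i)) ⊕ Fin k → VarsOf (domShape k m) :=
  Sum.elim (fun x => inputVar k m x.1 x.2) (outputVar k m)

def nodeIdx : (k : ℕ) → (m : Fin k → ℕ) → VarsOf (domShape k m) → (Σ i : Fin k, Fin (m i)) ⊕ Fin k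
  | 0, _, v => v.elim
  | k + 1, m, v =>
    Sum.elim
      (Sum.elim (fun q => .inl ⟨0, powIdx (m 0) q⟩) (fun _ => .inr 0))
      (fun w => Sum.map (fun x => ⟨x.1.succ, x.2⟩) Fin.succ (nodeIdx k (fun i => m i.succ) w)) v

lemma nodeVar_succ_inl_succ (k : ℕ) (m : Fin (k + 1) → ℕ) (x : Σ i : Fin k, Fin (m i.succ)) :
    nodeVar (k + 1) m (.inl ⟨x.1.succ, x.2⟩) = Sum.inr (nodeVar k (fun i => m i.succ) (.inl x)) :=
  rfl

lemma nodeVar_succ_inr_succ (k : ℕ) (m : Fin (k + 1) → ℕ) (i : Fin k) :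
    nodeVar (k + 1) m (.inr i.succ) = Sum.inr (nodeVar k (fun i => m i.succ) (.inr i)) :=
  rfl

lemma nodeIdx_nodeVar (k : ℕ) (m : Fin k → ℕ) (x : (Σ i : Fin k, Fin (m i)) ⊕ Fin k) :
    nodeIdx k m (nodeVar k m x) = x := by
  induction k with
  | zero => rcases x with ⟨i, _⟩ | i <;> exact i.elim0
  | succ k ih =>
    rcases x with ⟨i, j⟩ | i
    · induction i using Fin.cases with
      | zero =>
        exact congrArg (fun j => (.inl ⟨0, j⟩ : (Σ i : Fin (k + 1), Fin (m i)) ⊕ Fin (k + 1)))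
          (powIdx_powVar (m 0) j)
      | succ i =>
        rw [nodeVar_succ_inl_succ (x := ⟨i, j⟩)]
        exact congrArg (Sum.map _ _) (ih (fun i => m i.succ) (.inl ⟨i, j⟩))
    · induction i using Fin.cases with
      | zero => rfl
      | succ i =>
        rw [nodeVar_succ_inr_succ]
        exact congrArg (Sum.map _ _) (ih (fun i => m i.succ) (.inr i))

lemma nodeVar_nodeIdx (k : ℕ) (m : Fin k → ℕ) (v : VarsOf (domShape k m)) :
    nodeVar k m (nodeIdx k m v) = v := by
  induction k with
  | zero => exact v.elim
  | succ k ih =>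
    rcases v with (q | _) | w
    · exact congrArg (fun q => (.inl (.inl q) : VarsOf (domShape (k + 1) m))) (powVar_powIdx (m 0) q)
    · rfl
    · show nodeVar (k + 1) m (Sum.map _ _ (nodeIdx k _ w)) = _
      have := ih _ w
      rcases hx : nodeIdx k (fun i => m i.succ) w with x | i <;> rw [hx] at this
      · rw [Sum.map_inl, nodeVar_succ_inl_succ, this]
      · rw [Sum.map_inr, nodeVar_succ_inr_succ, this]

def nodeVarEquiv (k : ℕ) (m : Fin k → ℕ) : (Σ i : Fin k, Fin (m i)) ⊕ Fin k ≃ VarsOf (domShape k m) :=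
  ⟨nodeVar k m, nodeIdx k m, nodeIdx_nodeVar k m, nodeVar_nodeIdx k m⟩

lemma sgn_onePow (m : ℕ) (v : VarsOf (onePow m)) : sgn (onePow m) v = true := by
  induction m with
  | zero => exact v.elim
  | succ m ih => rcases v with v | _; exacts [ih v, rfl]

lemma sgn_nodeVar (k : ℕ) (m : Fin k → ℕ) (x : (Σ i : Fin k, Fin (m i)) ⊕ Fin k) :
    sgn (domShape k m) (nodeVar k m x) = x.isRight := by
  induction k with
  | zero => rcases x with ⟨i, _⟩ | i <;> exact i.elim0
  | succ k ih =>
    rcases x with ⟨i, j⟩ | i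
    · induction i using Fin.cases with
      | zero =>
        show (!sgn (onePow (m 0)) (powVar (m 0) j)) = false
        rw [sgn_onePow]; rfl
      | succ i => rw [nodeVar_succ_inl_succ (x := ⟨i, j⟩)]; exact ih (fun i => m i.succ) (.inl ⟨i, j⟩)
    · induction i using Fin.cases with
      | zero => rfl
      | succ i => rw [nodeVar_succ_inr_succ]; exact ih (fun i => m i.succ) (.inr i)

section TreeGraph

variable (k : ℕ) (m : Fin k → ℕ) (l : ℕ)

def treeVarEquiv :
    ((Σ i : Fin k, Fin (m i)) ⊕ Unit) ⊕ (Fin k ⊕ Fin l) ≃ VarsOf (domShape k m) ⊕ VarsOf (Xm l) :=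
  (Equiv.sumSumSumComm _ _ _ _).trans <|
    (nodeVarEquiv k m).sumCongr <| (Equiv.sumComm _ _).trans <| (powVarEquiv l).sumCongr (.refl _)

lemma treeVarEquiv_inl (x : (Σ i : Fin k, Fin (m i)) ⊕ Unit) :
    treeVarEquiv k m l (.inl x) = srcv k m l x := by
  rcases x with x | _ <;> rfl

lemma treeVarEquiv_inr (y : Fin k ⊕ Fin l) : treeVarEquiv k m l (.inr y) = targ k m l y := by
  rcases y with y | y <;> rfl

lemma tsgn_treeVarEquiv (s : ((Σ i : Fin k, Fin (m i)) ⊕ Unit) ⊕ (Fin k ⊕ Fin l)) :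
    tsgn (domShape k m) (Xm l) (treeVarEquiv k m l s) = s.isLeft := by
  rcases s with (x | _) | (i | p)
  · show (!sgn _ (nodeVar k m (.inl x))) = true
    rw [sgn_nodeVar]; rfl
  · rfl
  · show (!sgn _ (nodeVar k m (.inr i))) = false
    rw [sgn_nodeVar]; rfl
  · show (!sgn (onePow l) (powVar l p)) = false
    rw [sgn_onePow]; rfl

variable {k m l}

def treeGraph (α : TreeBij k m l) : KMGraph (domShape k m) (Xm l) :=
  .ofPairing (treeVarEquiv k m l) α (fun a => tsgn_treeVarEquiv k m l (.inl a))
    (fun b => tsgn_treeVarEquiv k m l (.inr b))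

lemma represents_iff_eq_treeGraph {α : TreeBij k m l} {ξ : KMGraph (domShape k m) (Xm l)} :
    Represents ξ α ↔ ξ = treeGraph α := by
  simp only [Represents, ← treeVarEquiv_inl, ← treeVarEquiv_inr]
  refine ⟨KMGraph.eq_ofPairing _ _, ?_⟩
  rintro rfl
  exact KMGraph.ofPairing_mate_inl _ _ _ _

lemma targ_injective : Function.Injective (targ k m l) := fun y y' h => by
  rw [← treeVarEquiv_inr, ← treeVarEquiv_inr] at h
  exact Sum.inr_injective ((treeVarEquiv k m l).injective h)

end TreeGraph

/-- the bijection `α` of a tree determines a unique Kelly–Mac Lane graph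
`ξ_T : X_{m 0} ⊗ ⋯ ⊗ X_{m (k-1)} → X_l` (a pairing of the `+`'s with the `−`'s of the
twisted sum), and the assignment `T ↦ ξ_T` is injective. -/
theorem tree_to_graph (k l : ℕ) (m : Fin k → ℕ) :
    (∀ α : TreeBij k m l, ∃! ξ : KMGraph (domShape k m) (Xm l), Represents ξ α) ∧
    (∀ (α α' : TreeBij k m l) (ξ : KMGraph (domShape k m) (Xm l)),
      Represents ξ α → Represents ξ α' → α = α') := by
  refine ⟨fun α => ⟨treeGraph α, represents_iff_eq_treeGraph.2 rfl,
    fun ξ => represents_iff_eq_treeGraph.1⟩, fun α α' ξ h h' => ?_⟩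
  ext x
  exact targ_injective ((h x).symm.trans (h' x))

end KM
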